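/- arXiv:2210.02248 — 2 statements merged into one kernel-verified Lean document; each statement's English description precedes it below -/
import Mathlib

section
/- If h : ℝ → ℝ is bounded, measurable, and strictly increasing on the interval [0, 1], and X is not ν-almost-everywhere equal to a constant, then ∫ h(X(y))·(X(y) − m) dν(y) > 0. -/
/-! Write `m = ∫ X dν`. Since `X - m` has mean zero, the integral equals
`∫ (h(X) - h(m)) (X - m) dν`, and monotonicity of `h` makes this integrand nonnegative,
vanishing only where `X = m`. As `X` is not a.e. constant, the integral is positive. -/

open MeasureTheory Set

theorem MonotoneOn.mul_sub_nonneg {s : Set ℝ} {f : ℝ → ℝ} (hf : MonotoneOn f s) {x c : ℝ}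
    (hx : x ∈ s) (hc : c ∈ s) : 0 ≤ (f x - f c) * (x - c) := by
  rcases le_total x c with hxc | hcx
  · exact mul_nonneg_of_nonpos_of_nonpos (sub_nonpos.2 (hf hx hc hxc)) (sub_nonpos.2 hxc)
  · exact mul_nonneg (sub_nonneg.2 (hf hc hx hcx)) (sub_nonneg.2 hcx)

theorem StrictMonoOn.mul_sub_ne_zero {s : Set ℝ} {f : ℝ → ℝ} (hf : StrictMonoOn f s) {x c : ℝ}
    (hx : x ∈ s) (hc : c ∈ s) (hxc : x ≠ c) : (f x - f c) * (x - c) ≠ 0 :=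
  mul_ne_zero (sub_ne_zero.2 (hf.injOn.ne hx hc hxc)) (sub_ne_zero.2 hxc)

theorem MonotoneOn.measurable_comp_of_mem_Icc {Ω : Type*} [MeasurableSpace Ω] {a b : ℝ}
    (hab : a ≤ b) {f : ℝ → ℝ} (hf : MonotoneOn f (Icc a b)) {X : Ω → ℝ} (hX : Measurable X)
    (hXab : ∀ ω, X ω ∈ Icc a b) : Measurable fun ω => f (X ω) := by
  have hmono : Monotone fun x => f (projIcc a b hab x) :=
    fun x y hxy => hf (Subtype.prop _) (Subtype.prop _) (monotone_projIcc hab hxy)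
  convert hmono.measurable.comp hX using 2 with ω
  simp [projIcc_of_mem hab (hXab ω)]

section

variable {Ω : Type*} [MeasurableSpace Ω] {μ : Measure Ω} [IsProbabilityMeasure μ] {X Y : Ω → ℝ}

theorem integral_sub_const_mul_sub_integral (hX : Integrable X μ)
    (hYX : Integrable (fun ω => Y ω * (X ω - ∫ ω', X ω' ∂μ)) μ) (c : ℝ) :
    ∫ ω, (Y ω - c) * (X ω - ∫ ω', X ω' ∂μ) ∂μ = ∫ ω, Y ω * (X ω - ∫ ω', X ω' ∂μ) ∂μ := by
  set m := ∫ ω, X ω ∂μ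
  have hcentered : ∫ ω, (X ω - m) ∂μ = 0 := by
    rw [integral_sub hX (integrable_const m)]
    simp [m]
  have hcX : Integrable (fun ω => c * (X ω - m)) μ := (hX.sub (integrable_const m)).const_mul c
  simp_rw [sub_mul]
  rw [integral_sub hYX hcX, integral_const_mul, hcentered, mul_zero, sub_zero]

theorem integral_comp_mul_sub_integral_pos {s : Set ℝ} {f : ℝ → ℝ} (hf : StrictMonoOn f s)
    (hs : Convex ℝ s) (hsc : IsClosed s) (hXs : ∀ᵐ ω ∂μ, X ω ∈ s) (hX : Integrable X μ)
    (hfX : Integrable (fun ω => f (X ω) * (X ω - ∫ ω', X ω' ∂μ)) μ)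
    (hXnc : ¬ ∃ c : ℝ, ∀ᵐ ω ∂μ, X ω = c) :
    0 < ∫ ω, f (X ω) * (X ω - ∫ ω', X ω' ∂μ) ∂μ := by
  set m := ∫ ω, X ω ∂μ
  have hm : m ∈ s := hs.integral_mem hsc hXs hX
  rw [← integral_sub_const_mul_sub_integral hX hfX (f m)]
  have hnonneg : 0 ≤ᵐ[μ] fun ω => (f (X ω) - f m) * (X ω - m) := by
    filter_upwards [hXs] with ω hω using hf.monotoneOn.mul_sub_nonneg hω hm
  have hint : Integrable (fun ω => (f (X ω) - f m) * (X ω - m)) μ := by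
    simp_rw [sub_mul]
    exact hfX.sub ((hX.sub (integrable_const m)).const_mul _)
  refine (integral_nonneg_of_ae hnonneg).lt_of_ne fun hzero => hXnc ⟨m, ?_⟩
  filter_upwards [(integral_eq_zero_iff_of_nonneg_ae hnonneg hint).1 hzero.symm, hXs]
    with ω hω hωs
  by_contra hne
  exact hf.mul_sub_ne_zero hωs hm hne hω

end

theorem covariance_pos_general (ν : Measure ℝ) [IsProbabilityMeasure ν]
    (X : ℝ → ℝ) (hXmeas : Measurable X) (hX : ∀ y, X y ∈ Set.Icc (0:ℝ) 1)
    (h : ℝ → ℝ)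
    (hhmono : StrictMonoOn h (Set.Icc (0:ℝ) 1))
    (hXnc : ¬ ∃ c : ℝ, ∀ᵐ y ∂ν, X y = c) :
    0 < ∫ y, h (X y) * (X y - ∫ z, X z ∂ν) ∂ν := by
  have hXint : Integrable X ν := .of_mem_Icc 0 1 hXmeas.aemeasurable (ae_of_all _ hX)
  have hhX : Integrable (fun y => h (X y)) ν :=
    .of_mem_Icc (h 0) (h 1)
      (hhmono.monotoneOn.measurable_comp_of_mem_Icc zero_le_one hXmeas hX).aemeasurable
      (ae_of_all _ fun y => ⟨hhmono.monotoneOn ⟨le_rfl, zero_le_one⟩ (hX y) (hX y).1,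
        hhmono.monotoneOn (hX y) ⟨zero_le_one, le_rfl⟩ (hX y).2⟩)
  have hm : ∫ z, X z ∂ν ∈ Icc (0:ℝ) 1 :=
    (convex_Icc 0 1).integral_mem isClosed_Icc (ae_of_all _ hX) hXint
  have hprod : Integrable (fun y => h (X y) * (X y - ∫ z, X z ∂ν)) ν :=
    hhX.mul_bdd (hXint.sub (integrable_const _)).aestronglyMeasurable
      (ae_of_all _ fun y => abs_sub_le_of_nonneg_of_le (hX y).1 (hX y).2 hm.1 hm.2)
  exact integral_comp_mul_sub_integral_pos hhmono (convex_Icc 0 1) isClosed_Icc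
    (ae_of_all _ hX) hXint hprod hXnc

/-- If `h` is bounded, measurable and strictly increasing on
`[0,1]`, `ν` is a probability measure, `0 ≤ X ≤ 1` with mean `m = ∫ X dν`,
and `X` is not ν-a.e. equal to a constant, then
`∫ h(X(y))·(X(y) − m) dν(y) > 0`. -/
theorem covariance_pos (ν : Measure ℝ) [IsProbabilityMeasure ν]
    (X : ℝ → ℝ) (hXmeas : Measurable X) (hX : ∀ y, X y ∈ Set.Icc (0:ℝ) 1)
    (h : ℝ → ℝ) (hhmeas : Measurable h) (hhbd : ∃ C : ℝ, ∀ x, |h x| ≤ C)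
    (hhmono : StrictMonoOn h (Set.Icc (0:ℝ) 1))
    (hXnc : ¬ ∃ c : ℝ, ∀ᵐ y ∂ν, X y = c) :
    0 < ∫ y, h (X y) * (X y - ∫ z, X z ∂ν) ∂ν :=
  covariance_pos_general ν X hXmeas hX h hhmono hXnc
end

section
/- For every η ≥ 0, engagement ENG is differentiable at η and ENG′(η) = s·(M − 1)·∫_ℝ (1 + μ(y))·(μ(y) − μ̄)/D(η,y)² · g(y) dy. -/
open MeasureTheory

/-- Density of the normal distribution `N(0, σ²)`. -/
noncomputable def gauss (σ y : ℝ) : ℝ :=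
  (Real.sqrt (2 * Real.pi * σ ^ 2))⁻¹ * Real.exp (-(y ^ 2) / (2 * σ ^ 2))

/-- Mean highlighting propensity `μ̄ = ∫ μ(y)·g(y) dy`. -/
noncomputable def mubar (σ : ℝ) (μ : ℝ → ℝ) : ℝ :=
  ∫ y : ℝ, μ y * gauss σ y

/-- Denominator `D(η,y) = M·(1 + η·μ̄) + η·(μ(y) − μ̄)`. -/
noncomputable def Dfun (σ : ℝ) (μ : ℝ → ℝ) (M η y : ℝ) : ℝ :=
  M * (1 + η * mubar σ μ) + η * (μ y - mubar σ μ)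

/-- Expected popularity `π(η,y) = (1 + η·μ(y))/D(η,y)`. -/
noncomputable def popEx (σ : ℝ) (μ : ℝ → ℝ) (M η y : ℝ) : ℝ :=
  (1 + η * μ y) / Dfun σ μ M η y

/-- The affine clicking response
`Λ(z) = (M + log β·(M − ζ₀ + ζ₁·z))/(M + log β·M·(M − 1)/2)`. -/
noncomputable def Lam (M β ζ₀ ζ₁ z : ℝ) : ℝ :=
  (M + Real.log β * (M - ζ₀ + ζ₁ * z)) / (M + Real.log β * M * (M - 1) / 2)

/-- The slope of `Λ`: `s = ζ₁·log β/(M + log β·M·(M − 1)/2)`. -/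
noncomputable def slopeLam (M β ζ₁ : ℝ) : ℝ :=
  ζ₁ * Real.log β / (M + Real.log β * M * (M - 1) / 2)

/-- Engagement `ENG(η) = ∫ (1 + μ(y))·Λ(π(η,y))·g(y) dy`. -/
noncomputable def ENG (σ : ℝ) (μ : ℝ → ℝ) (M β ζ₀ ζ₁ η : ℝ) : ℝ :=
  ∫ y : ℝ, (1 + μ y) * Lam M β ζ₀ ζ₁ (popEx σ μ M η y) * gauss σ y

section AuxLemmas

lemma gauss_nonneg' (σ y : ℝ) : 0 ≤ gauss σ y :=
  mul_nonneg (inv_nonneg.2 (Real.sqrt_nonneg _)) (Real.exp_pos _).le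

lemma gauss_measurable' (σ : ℝ) : Measurable (gauss σ) := by
  unfold gauss
  fun_prop

lemma integrable_gauss' (σ : ℝ) (hσ : 0 < σ) : Integrable (gauss σ) := by
  have hb : (0:ℝ) < 1 / (2 * σ ^ 2) := by positivity
  have h := (integrable_exp_neg_mul_sq hb).const_mul (Real.sqrt (2 * Real.pi * σ ^ 2))⁻¹
  refine h.congr (Filter.Eventually.of_forall fun y => ?_)
  simp only [gauss]
  rw [show -(1 / (2 * σ ^ 2)) * y ^ 2 = -(y ^ 2) / (2 * σ ^ 2) from by ring]

lemma integral_gauss' (σ : ℝ) (hσ : 0 < σ) : ∫ y : ℝ, gauss σ y = 1 := by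
  have hb : (0:ℝ) < 1 / (2 * σ ^ 2) := by positivity
  have h1 : ∀ y : ℝ, gauss σ y =
      (Real.sqrt (2 * Real.pi * σ ^ 2))⁻¹ * Real.exp (-(1 / (2 * σ ^ 2)) * y ^ 2) := by
    intro y
    simp only [gauss]
    congr 1
    ring
  simp_rw [h1]
  rw [integral_const_mul, integral_gaussian]
  have h2 : Real.pi / (1 / (2 * σ ^ 2)) = 2 * Real.pi * σ ^ 2 := by
    field_simp
  rw [h2, inv_mul_cancel₀]
  positivity

end AuxLemmas

set_option maxHeartbeats 1200000 in
/-- For every `η ≥ 0`, `ENG` is differentiable at `η` with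
`ENG′(η) = s·(M − 1)·∫ (1 + μ(y))·(μ(y) − μ̄)/D(η,y)² · g(y) dy`. -/
theorem ENG_hasDerivAt (σ : ℝ) (hσ : 0 < σ)
    (μ : ℝ → ℝ) (hμmeas : Measurable μ) (hμ : ∀ y, μ y ∈ Set.Icc (0:ℝ) 1)
    (M : ℝ) (hM : 2 ≤ M) (β ζ₀ ζ₁ : ℝ) (hβ : 1 < β) (hζ₁ : 0 < ζ₁)
    (η : ℝ) (hη : 0 ≤ η) :
    HasDerivAt (fun t => ENG σ μ M β ζ₀ ζ₁ t)
      (slopeLam M β ζ₁ * (M - 1) *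
        ∫ y : ℝ, (1 + μ y) * (μ y - mubar σ μ) / (Dfun σ μ M η y) ^ 2 * gauss σ y)
      η := by
  have hgi : Integrable (gauss σ) := integrable_gauss' σ hσ
  have hgm : Measurable (gauss σ) := gauss_measurable' σ
  have hM0 : (0:ℝ) < M := by linarith
  set m : ℝ := mubar σ μ with hmdef
  set s : ℝ := slopeLam M β ζ₁ with hsdef
  set c₀ : ℝ := (M + Real.log β * (M - ζ₀)) / (M + Real.log β * M * (M - 1) / 2) with hc₀def
  -- μ̄ ∈ [0,1]
  have hμg_int : Integrable (fun y => μ y * gauss σ y) := by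
    refine hgi.mono' ((hμmeas.mul hgm).aestronglyMeasurable) ?_
    refine Filter.Eventually.of_forall fun y => ?_
    rw [Real.norm_eq_abs, abs_of_nonneg (mul_nonneg (hμ y).1 (gauss_nonneg' σ y))]
    exact mul_le_of_le_one_left (gauss_nonneg' σ y) (hμ y).2
  have hm0 : 0 ≤ m := integral_nonneg fun y => mul_nonneg (hμ y).1 (gauss_nonneg' σ y)
  have hm1 : m ≤ 1 := by
    have := integral_mono hμg_int hgi
      (fun y => mul_le_of_le_one_left (gauss_nonneg' σ y) (hμ y).2)
    rw [integral_gauss' σ hσ] at this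
    exact this
  -- Λ is affine with slope `slopeLam`
  have hLam : ∀ z, Lam M β ζ₀ ζ₁ z = c₀ + s * z := by
    intro z
    simp only [Lam, hsdef, slopeLam, hc₀def]
    ring
  -- the denominator, rewritten
  have hD_eq : ∀ t y, Dfun σ μ M t y = M + t * ((M - 1) * m + μ y) := by
    intro t y
    simp only [Dfun, ← hmdef]
    ring
  have hε : (0:ℝ) < 1 / M := by positivity
  have hMM : (1 / M) * M = 1 := one_div_mul_cancel hM0.ne'
  -- lower bound on the denominator on the ball
  have hDlb : ∀ t ∈ Metric.ball η (1 / M), ∀ y : ℝ, 1 ≤ Dfun σ μ M t y := by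
    intro t ht y
    rw [Metric.mem_ball, Real.dist_eq] at ht
    have h1 : -(1 / M) < t - η := (abs_lt.1 ht).1
    have ha0 : 0 ≤ (M - 1) * m + μ y := by nlinarith [(hμ y).1]
    have haM : (M - 1) * m + μ y ≤ M := by nlinarith [(hμ y).2]
    rw [hD_eq]
    rcases le_or_gt 0 t with h | h
    · nlinarith
    · have ht2 : -(1 / M) < t := by linarith
      have h3 : t * M ≤ t * ((M - 1) * m + μ y) :=
        mul_le_mul_of_nonpos_left haM h.le
      have h4 : -(1 / M) * M < t * M := mul_lt_mul_of_pos_right ht2 hM0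
      nlinarith
  -- the pointwise derivative
  set F' : ℝ → ℝ → ℝ := fun t y =>
    s * ((M - 1) * (μ y - m) / (Dfun σ μ M t y) ^ 2) * ((1 + μ y) * gauss σ y) with hF'def
  -- measurability of D, popEx, F t
  have hDmeas : ∀ t, Measurable fun y => Dfun σ μ M t y := by
    intro t
    unfold Dfun
    fun_prop
  have hπmeas : ∀ t, Measurable fun y => popEx σ μ M t y := by
    intro t
    unfold popEx Dfun
    fun_prop
  have hFmeas : ∀ t, AEStronglyMeasurable
      (fun y => (1 + μ y) * Lam M β ζ₀ ζ₁ (popEx σ μ M t y) * gauss σ y) volume := by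
    intro t
    have hL : Measurable fun y => Lam M β ζ₀ ζ₁ (popEx σ μ M t y) := by
      have hc : Continuous fun z => Lam M β ζ₀ ζ₁ z := by
        unfold Lam
        fun_prop
      exact hc.measurable.comp (hπmeas t)
    exact (((measurable_const.add hμmeas).mul hL).mul hgm).aestronglyMeasurable
  -- |popEx η| ≤ 1 + η
  have hπb : ∀ y, |popEx σ μ M η y| ≤ 1 + η := by
    intro y
    have hD1 := hDlb η (Metric.mem_ball_self hε) y
    simp only [popEx]
    rw [abs_div]
    have hnum0 : 0 ≤ 1 + η * μ y := by nlinarith [(hμ y).1]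
    have hnum : |1 + η * μ y| ≤ 1 + η := by
      rw [abs_of_nonneg hnum0]
      nlinarith [(hμ y).2, (hμ y).1]
    have hden : 1 ≤ |Dfun σ μ M η y| := by
      rw [abs_of_nonneg (by linarith)]
      exact hD1
    calc |1 + η * μ y| / |Dfun σ μ M η y| ≤ |1 + η * μ y| :=
          div_le_self (abs_nonneg _) hden
      _ ≤ 1 + η := hnum
  -- integrability of F η
  have hFint : Integrable
      (fun y => (1 + μ y) * Lam M β ζ₀ ζ₁ (popEx σ μ M η y) * gauss σ y) := by
    refine (hgi.const_mul (2 * (|c₀| + |s| * (1 + η)))).mono' (hFmeas η) ?_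
    refine Filter.Eventually.of_forall fun y => ?_
    rw [Real.norm_eq_abs, abs_mul, abs_mul, abs_of_nonneg (gauss_nonneg' σ y)]
    have h1 : |1 + μ y| ≤ 2 := by
      rw [abs_of_nonneg (by nlinarith [(hμ y).1])]
      nlinarith [(hμ y).2]
    have h2 : |Lam M β ζ₀ ζ₁ (popEx σ μ M η y)| ≤ |c₀| + |s| * (1 + η) := by
      rw [hLam]
      calc |c₀ + s * popEx σ μ M η y| ≤ |c₀| + |s * popEx σ μ M η y| := abs_add_le _ _
        _ = |c₀| + |s| * |popEx σ μ M η y| := by rw [abs_mul]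
        _ ≤ |c₀| + |s| * (1 + η) := by
            have := hπb y
            nlinarith [abs_nonneg s]
    calc |1 + μ y| * |Lam M β ζ₀ ζ₁ (popEx σ μ M η y)| * gauss σ y
        ≤ 2 * (|c₀| + |s| * (1 + η)) * gauss σ y := by
          have hg := gauss_nonneg' σ y
          have hLnn : (0:ℝ) ≤ |Lam M β ζ₀ ζ₁ (popEx σ μ M η y)| := abs_nonneg _
          exact mul_le_mul_of_nonneg_right
            (mul_le_mul h1 h2 hLnn (by norm_num)) hg
      _ = 2 * (|c₀| + |s| * (1 + η)) * gauss σ y := rfl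
  -- measurability of F' η
  have hF'meas : AEStronglyMeasurable (F' η) volume := by
    simp only [hF'def]
    exact ((((hμmeas.sub measurable_const).const_mul (M - 1)).div
      ((hDmeas η).pow measurable_const)).const_mul s).mul
      ((measurable_const.add hμmeas).mul hgm) |>.aestronglyMeasurable
  -- the bound on F'
  have hbound : ∀ᵐ y : ℝ, ∀ t ∈ Metric.ball η (1 / M),
      ‖F' t y‖ ≤ (|s| * ((M - 1) * 2)) * gauss σ y := by
    refine Filter.Eventually.of_forall fun y => fun t ht => ?_
    have hD1 := hDlb t ht y
    have hD2 : 1 ≤ (Dfun σ μ M t y) ^ 2 := by nlinarith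
    simp only [hF'def]
    rw [Real.norm_eq_abs, abs_mul, abs_mul]
    have hX : |(M - 1) * (μ y - m) / (Dfun σ μ M t y) ^ 2| ≤ M - 1 := by
      rw [abs_div]
      have hd : 1 ≤ |(Dfun σ μ M t y) ^ 2| := by rwa [abs_of_nonneg (by positivity)]
      calc |(M - 1) * (μ y - m)| / |(Dfun σ μ M t y) ^ 2|
          ≤ |(M - 1) * (μ y - m)| := div_le_self (abs_nonneg _) hd
        _ = |M - 1| * |μ y - m| := abs_mul _ _
        _ ≤ (M - 1) * 1 := by
            have hμm : |μ y - m| ≤ 1 :=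
              abs_le.2 ⟨by nlinarith [(hμ y).1], by nlinarith [(hμ y).2]⟩
            rw [abs_of_nonneg (by linarith : (0:ℝ) ≤ M - 1)]
            nlinarith
        _ = M - 1 := mul_one _
    have hY : |(1 + μ y) * gauss σ y| ≤ 2 * gauss σ y := by
      rw [abs_mul, abs_of_nonneg (gauss_nonneg' σ y),
        abs_of_nonneg (by nlinarith [(hμ y).1] : (0:ℝ) ≤ 1 + μ y)]
      nlinarith [(hμ y).2, gauss_nonneg' σ y]
    calc |s| * |(M - 1) * (μ y - m) / (Dfun σ μ M t y) ^ 2| * |(1 + μ y) * gauss σ y|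
        ≤ |s| * (M - 1) * (2 * gauss σ y) := by
          have h0 : (0:ℝ) ≤ |s| := abs_nonneg _
          have h1 : (0:ℝ) ≤ |(1 + μ y) * gauss σ y| := abs_nonneg _
          exact mul_le_mul (mul_le_mul_of_nonneg_left hX h0) hY h1
            (mul_nonneg h0 (by linarith))
      _ = (|s| * ((M - 1) * 2)) * gauss σ y := by ring
  -- integrability of the bound
  have hbound_int : Integrable (fun y => (|s| * ((M - 1) * 2)) * gauss σ y) :=
    hgi.const_mul _
  -- differentiability in t, for t in the ball
  have hdiff : ∀ᵐ y : ℝ, ∀ t ∈ Metric.ball η (1 / M),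
      HasDerivAt (fun t => (1 + μ y) * Lam M β ζ₀ ζ₁ (popEx σ μ M t y) * gauss σ y)
        (F' t y) t := by
    refine Filter.Eventually.of_forall fun y => fun t ht => ?_
    have hD1 := hDlb t ht y
    have hDne : Dfun σ μ M t y ≠ 0 := by linarith
    -- derivative of D
    have hD : HasDerivAt (fun u => Dfun σ μ M u y) ((M - 1) * m + μ y) t := by
      have h := ((hasDerivAt_id t).const_mul ((M - 1) * m + μ y)).add_const M
      simp only [mul_one] at h
      have heq : (fun u => Dfun σ μ M u y) = fun u => ((M - 1) * m + μ y) * u + M := by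
        funext u
        rw [hD_eq]
        ring
      rw [heq]
      exact h
    -- derivative of the numerator
    have hN : HasDerivAt (fun u => 1 + u * μ y) (μ y) t := by
      have h := ((hasDerivAt_id t).mul_const (μ y)).const_add 1
      simpa using h
    -- derivative of popEx
    have hπ : HasDerivAt (fun u => popEx σ μ M u y)
        ((M - 1) * (μ y - m) / (Dfun σ μ M t y) ^ 2) t := by
      have h := hN.div hD hDne
      have hnum : μ y * Dfun σ μ M t y - (1 + t * μ y) * ((M - 1) * m + μ y)
          = (M - 1) * (μ y - m) := by
        rw [hD_eq]
        ring
      rw [← hnum]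
      exact h
    -- derivative of the full integrand
    have h := (((hπ.const_mul s).const_add c₀).const_mul (1 + μ y)).mul_const (gauss σ y)
    have heq : (fun u => (1 + μ y) * Lam M β ζ₀ ζ₁ (popEx σ μ M u y) * gauss σ y)
        = fun u => (1 + μ y) * (c₀ + s * popEx σ μ M u y) * gauss σ y := by
      funext u
      rw [hLam]
    rw [heq]
    have hval : F' t y
        = (1 + μ y) * (s * ((M - 1) * (μ y - m) / (Dfun σ μ M t y) ^ 2)) * gauss σ y := by
      simp only [hF'def]
      ring
    rw [hval]
    exact h
  -- apply differentiation under the integral sign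
  have key := hasDerivAt_integral_of_dominated_loc_of_deriv_le (Metric.ball_mem_nhds η hε)
    (Filter.Eventually.of_forall hFmeas) hFint hF'meas hbound hbound_int hdiff
  obtain ⟨-, hder⟩ := key
  -- identify the derivative value
  have hval : (∫ y : ℝ, F' η y)
      = s * (M - 1) * ∫ y : ℝ, (1 + μ y) * (μ y - m) / (Dfun σ μ M η y) ^ 2 * gauss σ y := by
    rw [← integral_const_mul]
    congr 1
    funext y
    simp only [hF'def]
    ring
  simp only [ENG]
  rw [← hval]
  exact hder
end
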